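/- Let S be a summary of G given by a partition {V_1,...,V_k} of V with all the stated nondegeneracy conditions (n_a, n_b ≥ 1, and every block containing an internal edge has size ≥ 2, and n_a + n_b ≥ 2), and let S^{a,b} be the summary obtained from S by replacing the two blocks V_a and V_b with their union V_a ∪ V_b. Then RE(G|S) − RE(G|S^{a,b}) = −4e_a²/C(n_a,2) − Σ_{i≠a} 4e_{ai}²/(n_a n_i) + 4e_{ab}²/(n_a n_b) − 4e_b²/C(n_b,2) − Σ_{i≠b} 4e_{bi}²/(n_b n_i) + 4(e_a + e_b + e_{ab})²/C(n_a+n_b,2) + (4/(n_a+n_b))·Σ_{i≠a,b} ( e_{ai}²/n_i + e_{bi}²/n_i + 2·e_{ai}·e_{bi}/n_i ), where terms of the form e²/C(m,2) with C(m,2) = 0 are interpreted as 0 (in that case e = 0). -/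

import Mathlib

/-!
Setting: `A : V → V → ℝ` is the (symmetric, 0/1-valued, zero-diagonal) adjacency matrix
of a finite simple undirected graph `G = (V,E)`, and `P : V → Fin k` assigns each vertex
to its block of the partition `{V_1, …, V_k}`.  Merging the blocks `V_a` and `V_b` into
`V_a ∪ V_b` corresponds to the assignment `fun v => if P v = b then a else P v`
(which sends every vertex of `V_b` to the block `a`; the now-empty block `b` carries no
vertices, so it contributes nothing to `Ā` or to `RE`).
-/

open Finset

/-- `n_i`: the number of vertices in block `i`. -/
def blockCard {V : Type*} [Fintype V] {k : ℕ} (P : V → Fin k) (i : Fin k) : ℕ :=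
  (Finset.univ.filter fun v => P v = i).card

/-- `e_i`: the number of edges of `G` with both endpoints in block `i`. -/
noncomputable def eIn {V : Type*} [Fintype V] {k : ℕ} (A : V → V → ℝ) (P : V → Fin k)
    (i : Fin k) : ℝ :=
  (∑ u ∈ Finset.univ.filter (fun v => P v = i),
      ∑ v ∈ Finset.univ.filter (fun v => P v = i), A u v) / 2

/-- `e_{ij}`: the number of edges of `G` between block `i` and block `j` (for `i ≠ j`). -/
noncomputable def eCross {V : Type*} [Fintype V] {k : ℕ} (A : V → V → ℝ) (P : V → Fin k)
    (i j : Fin k) : ℝ :=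
  ∑ u ∈ Finset.univ.filter (fun v => P v = i),
    ∑ v ∈ Finset.univ.filter (fun v => P v = j), A u v

/-- The expected adjacency matrix `Ā` of the summary determined by `P`. -/
noncomputable def Abar {V : Type*} [Fintype V] [DecidableEq V] {k : ℕ}
    (A : V → V → ℝ) (P : V → Fin k) (u v : V) : ℝ :=
  if u = v then 0
  else if P u = P v then eIn A P (P u) / ((blockCard P (P u)).choose 2 : ℝ)
  else eCross A P (P u) (P v) / ((blockCard P (P u) : ℝ) * (blockCard P (P v) : ℝ))

/-- The `l₁`-reconstruction error `RE(G|S) = Σ_u Σ_v |Ā(u,v) − A(u,v)|`. -/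
noncomputable def RE {V : Type*} [Fintype V] [DecidableEq V] {k : ℕ}
    (A : V → V → ℝ) (P : V → Fin k) : ℝ :=
  ∑ u : V, ∑ v : V, |Abar A P u v - A u v|

/-!
If a block pair (`V_i × V_j` as ordered vertex pairs) has `p` pairs of which `m` are edges,
`Ā` is the constant `m / p` on it, so the pair contributes
`m (1 - m/p) + (p - m) (m/p) = 2m - 2m²/p` to `RE`. Summing over all block pairs, the linear parts
add up to `2 Σ A`, independently of the partition, so `RE(G|S) - RE(G|S^{a,b})` is the
difference of the quadratic penalties `2m²/p`; these agree for the block pairs avoiding `V_a` and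
`V_b`, and the remaining ones are read off from the edge counts of the merged block.
-/

open Finset

section MeanDeviation

variable {ι : Type*}

lemma abs_sub_of_eq_zero_or_eq_one {c x : ℝ} (hc₀ : 0 ≤ c) (hc₁ : c ≤ 1)
    (hx : x = 0 ∨ x = 1) :
    |c - x| = x + c - 2 * c * x := by
  rcases hx with rfl | rfl
  · simp [abs_of_nonneg hc₀]
  · rw [abs_of_nonpos (by linarith)]
    ring

lemma sum_abs_mean_sub_of_eq_zero_or_eq_one (s : Finset ι) (f : ι → ℝ)
    (hf : ∀ x ∈ s, f x = 0 ∨ f x = 1) :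
    ∑ x ∈ s, |(∑ y ∈ s, f y) / #s - f x|
      = 2 * ∑ x ∈ s, f x - 2 * (∑ x ∈ s, f x) ^ 2 / #s := by
  rcases s.eq_empty_or_nonempty with rfl | hs
  · simp
  set m := ∑ y ∈ s, f y
  have hn : (0 : ℝ) < #s := by exact_mod_cast hs.card_pos
  have hm₀ : 0 ≤ m := sum_nonneg fun x hx => by rcases hf x hx with h | h <;> simp [h]
  have hm₁ : m ≤ #s := by
    rw [← nsmul_one (#s), ← sum_const]
    exact sum_le_sum fun x hx => by rcases hf x hx with h | h <;> simp [h]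
  have hc₀ : 0 ≤ m / #s := div_nonneg hm₀ hn.le
  have hc₁ : m / #s ≤ 1 := (div_le_one hn).mpr hm₁
  rw [sum_congr rfl fun x hx => abs_sub_of_eq_zero_or_eq_one hc₀ hc₁ (hf x hx),
    sum_sub_distrib, sum_add_distrib, sum_const, nsmul_eq_mul, ← mul_sum]
  field_simp
  ring

end MeanDeviation

section Blocks

variable {V : Type*} [Fintype V] {k : ℕ}

def block {ι : Type*} [DecidableEq ι] (P : V → ι) (i : ι) : Finset V :=
  univ.filter fun v => P v = i

lemma blockCard_eq_card_block (P : V → Fin k) (i : Fin k) : blockCard P i = #(block P i) := rfl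

lemma eIn_eq_sum_block (A : V → V → ℝ) (P : V → Fin k) (i : Fin k) :
    eIn A P i = (∑ u ∈ block P i, ∑ v ∈ block P i, A u v) / 2 := rfl

lemma eCross_eq_sum_block (A : V → V → ℝ) (P : V → Fin k) (i j : Fin k) :
    eCross A P i j = ∑ u ∈ block P i, ∑ v ∈ block P j, A u v := rfl

lemma sum_sum_eq_sum_sum_block {ι M : Type*} [Fintype ι] [DecidableEq ι] [AddCommMonoid M]
    (P : V → ι) (f : V → V → M) :
    ∑ u, ∑ v, f u v = ∑ i, ∑ j, ∑ u ∈ block P i, ∑ v ∈ block P j, f u v := by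
  rw [← sum_fiberwise univ P]
  refine sum_congr rfl fun i _ => ?_
  rw [sum_comm, ← sum_fiberwise univ P]
  exact sum_congr rfl fun j _ => sum_comm

lemma eCross_comm (A : V → V → ℝ) (P : V → Fin k) (hsym : ∀ u v, A u v = A v u)
    (i j : Fin k) : eCross A P i j = eCross A P j i := by
  rw [eCross_eq_sum_block, eCross_eq_sum_block, sum_comm]
  exact sum_congr rfl fun u _ => sum_congr rfl fun v _ => hsym v u

noncomputable def blockPenalty (A : V → V → ℝ) (P : V → Fin k) (i j : Fin k) : ℝ :=
  if i = j then 4 * eIn A P i ^ 2 / ((blockCard P i).choose 2 : ℝ)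
  else 2 * eCross A P i j ^ 2 / ((blockCard P i : ℝ) * (blockCard P j : ℝ))

variable (A : V → V → ℝ) (P : V → Fin k)

lemma blockPenalty_self (i : Fin k) :
    blockPenalty A P i i = 4 * eIn A P i ^ 2 / ((blockCard P i).choose 2 : ℝ) :=
  if_pos rfl

lemma blockPenalty_of_ne {i j : Fin k} (hij : i ≠ j) :
    blockPenalty A P i j
      = 2 * eCross A P i j ^ 2 / ((blockCard P i : ℝ) * (blockCard P j : ℝ)) :=
  if_neg hij

lemma blockPenalty_comm (hsym : ∀ u v, A u v = A v u) (i j : Fin k) :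
    blockPenalty A P i j = blockPenalty A P j i := by
  rcases eq_or_ne i j with rfl | hij
  · rfl
  · rw [blockPenalty_of_ne A P hij, blockPenalty_of_ne A P hij.symm, eCross_comm A P hsym,
      mul_comm (blockCard P i : ℝ)]

lemma blockPenalty_eq_zero_of_block_eq_empty {i : Fin k} (hi : block P i = ∅) (j : Fin k) :
    blockPenalty A P i j = 0 ∧ blockPenalty A P j i = 0 := by
  rcases eq_or_ne i j with rfl | hij <;>
    simp [blockPenalty, eIn_eq_sum_block, eCross_eq_sum_block, *, Ne.symm]

variable [DecidableEq V]

lemma sum_abs_Abar_sub_block_self (h01 : ∀ u v, A u v = 0 ∨ A u v = 1)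
    (hdiag : ∀ u, A u u = 0) (i : Fin k) :
    ∑ u ∈ block P i, ∑ v ∈ block P i, |Abar A P u v - A u v|
      = 2 * ∑ u ∈ block P i, ∑ v ∈ block P i, A u v - blockPenalty A P i i := by
  have hoff {f : V → V → ℝ} (hf : ∀ u, f u u = 0) :
      ∑ u ∈ block P i, ∑ v ∈ block P i, f u v
        = ∑ p ∈ (block P i).offDiag, f p.1 p.2 := by
    rw [← sum_product', eq_comm]
    refine sum_subset (fun p hp => ?_) fun p hp hp' => ?_
    · obtain ⟨hu, hv, -⟩ := mem_offDiag.mp hp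
      exact mem_product.mpr ⟨hu, hv⟩
    · have : p.1 = p.2 := by
        by_contra h
        exact hp' (mem_offDiag.mpr ⟨(mem_product.mp hp).1, (mem_product.mp hp).2, h⟩)
      rw [← this]
      exact hf _
  have hchoose : ((blockCard P i).choose 2 : ℝ) = #(block P i).offDiag / 2 := by
    rw [Nat.cast_choose_two, offDiag_card, Nat.cast_sub (Nat.le_mul_self _),
      blockCard_eq_card_block]
    push_cast
    ring
  have hAbar : ∀ p ∈ (block P i).offDiag,
      Abar A P p.1 p.2 = (∑ q ∈ (block P i).offDiag, A q.1 q.2) / #(block P i).offDiag := by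
    intro p hp
    obtain ⟨hu, hv, huv⟩ := mem_offDiag.mp hp
    have hu' : P p.1 = i := (mem_filter.mp hu).2
    have hv' : P p.2 = i := (mem_filter.mp hv).2
    rw [Abar, if_neg huv, if_pos (hu'.trans hv'.symm), hu', eIn_eq_sum_block, ← hoff hdiag,
      hchoose]
    ring
  rw [hoff (f := fun u v => |Abar A P u v - A u v|) (by simp [Abar, hdiag]),
    sum_congr rfl fun p hp => by rw [hAbar p hp],
    sum_abs_mean_sub_of_eq_zero_or_eq_one _ _ fun p _ => h01 _ _, ← hoff hdiag,
    blockPenalty_self, eIn_eq_sum_block, hchoose]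
  ring

lemma sum_abs_Abar_sub_block_of_ne (h01 : ∀ u v, A u v = 0 ∨ A u v = 1) {i j : Fin k}
    (hij : i ≠ j) :
    ∑ u ∈ block P i, ∑ v ∈ block P j, |Abar A P u v - A u v|
      = 2 * ∑ u ∈ block P i, ∑ v ∈ block P j, A u v - blockPenalty A P i j := by
  have hAbar : ∀ p ∈ block P i ×ˢ block P j,
      Abar A P p.1 p.2
        = (∑ q ∈ block P i ×ˢ block P j, A q.1 q.2) / #(block P i ×ˢ block P j) := by
    intro p hp
    obtain ⟨hu, hv⟩ := mem_product.mp hp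
    have hu' : P p.1 = i := (mem_filter.mp hu).2
    have hv' : P p.2 = j := (mem_filter.mp hv).2
    have huv : p.1 ≠ p.2 := fun h => hij (by rw [← hu', ← hv', h])
    rw [Abar, if_neg huv, hu', hv', if_neg hij, sum_product', card_product, Nat.cast_mul]
    rfl
  rw [← sum_product' _ _ fun u v => |Abar A P u v - A u v|,
    sum_congr rfl fun p hp => by rw [hAbar p hp],
    sum_abs_mean_sub_of_eq_zero_or_eq_one _ _ fun p _ => h01 _ _, sum_product',
    blockPenalty_of_ne A P hij, card_product, Nat.cast_mul]
  rfl

lemma sum_abs_Abar_sub_block (h01 : ∀ u v, A u v = 0 ∨ A u v = 1) (hdiag : ∀ u, A u u = 0)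
    (i j : Fin k) :
    ∑ u ∈ block P i, ∑ v ∈ block P j, |Abar A P u v - A u v|
      = 2 * ∑ u ∈ block P i, ∑ v ∈ block P j, A u v - blockPenalty A P i j := by
  rcases eq_or_ne i j with rfl | hij
  · exact sum_abs_Abar_sub_block_self A P h01 hdiag i
  · exact sum_abs_Abar_sub_block_of_ne A P h01 hij

lemma RE_eq_sub_sum_blockPenalty (h01 : ∀ u v, A u v = 0 ∨ A u v = 1)
    (hdiag : ∀ u, A u u = 0) :
    RE A P = 2 * ∑ u, ∑ v, A u v - ∑ i, ∑ j, blockPenalty A P i j := by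
  simp only [RE, sum_sum_eq_sum_sum_block P, sum_abs_Abar_sub_block A P h01 hdiag,
    sum_sub_distrib, mul_sum]

end Blocks

section Split

variable {ι M : Type*} [Fintype ι] [DecidableEq ι] [AddCommMonoid M] {a b : ι}

lemma sum_eq_add_add_sum_erase_erase (hab : a ≠ b) (f : ι → M) :
    ∑ i, f i = f a + f b + ∑ i ∈ (univ.erase a).erase b, f i := by
  rw [← add_sum_erase _ f (mem_univ a),
    ← add_sum_erase _ f (mem_erase.mpr ⟨hab.symm, mem_univ b⟩), add_assoc]

lemma sum_sum_eq_of_ne (hab : a ≠ b) (g : ι → ι → M) :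
    ∑ i, ∑ j, g i j
      = g a a + g a b + g b a + g b b
        + ∑ j ∈ (univ.erase a).erase b, (g a j + g j a + g b j + g j b)
        + ∑ i ∈ (univ.erase a).erase b, ∑ j ∈ (univ.erase a).erase b, g i j := by
  simp only [sum_eq_add_add_sum_erase_erase hab, sum_add_distrib]
  abel

end Split

section Merge

variable {V : Type*} [Fintype V] {k : ℕ}

def mergeBlocks {ι : Type*} [DecidableEq ι] (P : V → ι) (a b : ι) : V → ι :=
  fun v => if P v = b then a else P v

variable (A : V → V → ℝ) (P : V → Fin k) {a b : Fin k}

lemma block_mergeBlocks_right (hab : a ≠ b) : block (mergeBlocks P a b) b = ∅ := by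
  ext v
  unfold block mergeBlocks
  simp only [mem_filter, mem_univ, true_and]
  split_ifs <;> simp_all

lemma block_mergeBlocks_of_ne {i : Fin k} (hia : i ≠ a) (hib : i ≠ b) :
    block (mergeBlocks P a b) i = block P i := by
  ext v
  unfold block mergeBlocks
  simp only [mem_filter, mem_univ, true_and]
  split_ifs with h <;> simp [h, hia.symm, hib.symm]

lemma blockCard_mergeBlocks_of_ne {i : Fin k} (hia : i ≠ a) (hib : i ≠ b) :
    blockCard (mergeBlocks P a b) i = blockCard P i := by
  rw [blockCard_eq_card_block, block_mergeBlocks_of_ne P hia hib]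
  rfl

lemma disjoint_block (hab : a ≠ b) : Disjoint (block P a) (block P b) :=
  disjoint_filter.mpr fun _ _ ha hb => hab (ha.symm.trans hb)

variable [DecidableEq V]

lemma block_mergeBlocks_left : block (mergeBlocks P a b) a = block P a ∪ block P b := by
  ext v
  unfold block mergeBlocks
  simp only [mem_union, mem_filter, mem_univ, true_and]
  split_ifs <;> simp_all

lemma blockCard_mergeBlocks_left (hab : a ≠ b) :
    blockCard (mergeBlocks P a b) a = blockCard P a + blockCard P b := by
  rw [blockCard_eq_card_block, block_mergeBlocks_left,
    card_union_of_disjoint (disjoint_block P hab)]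
  rfl

lemma eIn_mergeBlocks_left (hsym : ∀ u v, A u v = A v u) (hab : a ≠ b) :
    eIn A (mergeBlocks P a b) a = eIn A P a + eIn A P b + eCross A P a b := by
  have hba := eCross_comm A P hsym b a
  simp only [eIn_eq_sum_block, eCross_eq_sum_block] at hba ⊢
  rw [block_mergeBlocks_left, sum_union (disjoint_block P hab)]
  simp only [sum_union (disjoint_block P hab), sum_add_distrib, hba]
  ring

lemma eCross_mergeBlocks_left (hab : a ≠ b) {j : Fin k} (hja : j ≠ a) (hjb : j ≠ b) :
    eCross A (mergeBlocks P a b) a j = eCross A P a j + eCross A P b j := by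
  simp only [eCross_eq_sum_block]
  rw [block_mergeBlocks_left, block_mergeBlocks_of_ne P hja hjb, sum_union (disjoint_block P hab)]

end Merge

section MergePenalty

variable {V : Type*} [Fintype V] {k : ℕ} (A : V → V → ℝ) (P : V → Fin k) {a b : Fin k}

lemma blockPenalty_mergeBlocks_of_ne {i j : Fin k} (hia : i ≠ a) (hib : i ≠ b) (hja : j ≠ a)
    (hjb : j ≠ b) : blockPenalty A (mergeBlocks P a b) i j = blockPenalty A P i j := by
  simp only [blockPenalty, eIn_eq_sum_block, eCross_eq_sum_block, blockCard_eq_card_block,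
    block_mergeBlocks_of_ne P hia hib, block_mergeBlocks_of_ne P hja hjb]

lemma sum_blockPenalty_mergeBlocks_sub (hsym : ∀ u v, A u v = A v u) (hab : a ≠ b) :
    ∑ i, ∑ j, blockPenalty A (mergeBlocks P a b) i j - ∑ i, ∑ j, blockPenalty A P i j
      = blockPenalty A (mergeBlocks P a b) a a - blockPenalty A P a a - blockPenalty A P b b
        - 2 * blockPenalty A P a b
        + ∑ j ∈ (univ.erase a).erase b, 2 * (blockPenalty A (mergeBlocks P a b) a j
            - blockPenalty A P a j - blockPenalty A P b j) := by
  have hb := blockPenalty_eq_zero_of_block_eq_empty A _ (block_mergeBlocks_right P hab)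
  have hrest : ∀ i ∈ (univ.erase a).erase b,
      ∑ j ∈ (univ.erase a).erase b, blockPenalty A (mergeBlocks P a b) i j
        = ∑ j ∈ (univ.erase a).erase b, blockPenalty A P i j := by
    intro i hi
    refine sum_congr rfl fun j hj => ?_
    simp only [mem_erase] at hi hj
    exact blockPenalty_mergeBlocks_of_ne A P hi.2.1 hi.1 hj.2.1 hj.1
  have hcross : ∑ j ∈ (univ.erase a).erase b,
        (blockPenalty A (mergeBlocks P a b) a j + blockPenalty A (mergeBlocks P a b) j a
          + blockPenalty A (mergeBlocks P a b) b j + blockPenalty A (mergeBlocks P a b) j b)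
      - ∑ j ∈ (univ.erase a).erase b, (blockPenalty A P a j + blockPenalty A P j a
          + blockPenalty A P b j + blockPenalty A P j b)
      = ∑ j ∈ (univ.erase a).erase b, 2 * (blockPenalty A (mergeBlocks P a b) a j
            - blockPenalty A P a j - blockPenalty A P b j) := by
    rw [← sum_sub_distrib]
    refine sum_congr rfl fun j _ => ?_
    rw [(hb j).1, (hb j).2, blockPenalty_comm A _ hsym j a, blockPenalty_comm A P hsym j a,
      blockPenalty_comm A P hsym j b]
    ring
  rw [sum_sum_eq_of_ne hab, sum_sum_eq_of_ne hab, sum_congr rfl hrest, (hb a).1, (hb a).2,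
    (hb b).1, blockPenalty_comm A P hsym b a]
  linear_combination hcross

variable [DecidableEq V]

lemma blockPenalty_mergeBlocks_left_self (hsym : ∀ u v, A u v = A v u) (hab : a ≠ b) :
    blockPenalty A (mergeBlocks P a b) a a
      = 4 * (eIn A P a + eIn A P b + eCross A P a b) ^ 2
          / ((blockCard P a + blockCard P b).choose 2 : ℝ) := by
  rw [blockPenalty_self, eIn_mergeBlocks_left A P hsym hab, blockCard_mergeBlocks_left P hab]

lemma blockPenalty_mergeBlocks_left_of_ne (hab : a ≠ b) {j : Fin k} (hja : j ≠ a)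
    (hjb : j ≠ b) :
    blockPenalty A (mergeBlocks P a b) a j
      = 2 * (eCross A P a j + eCross A P b j) ^ 2
          / (((blockCard P a : ℝ) + blockCard P b) * blockCard P j) := by
  rw [blockPenalty_of_ne A _ hja.symm, eCross_mergeBlocks_left A P hab hja hjb,
    blockCard_mergeBlocks_left P hab, blockCard_mergeBlocks_of_ne P hja hjb, Nat.cast_add]

lemma two_mul_blockPenalty_mergeBlocks_left_sub (hab : a ≠ b) {j : Fin k}
    (hj : j ∈ (univ.erase a).erase b) :
    2 * (blockPenalty A (mergeBlocks P a b) a j - blockPenalty A P a j - blockPenalty A P b j)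
      = 4 / ((blockCard P a : ℝ) + blockCard P b)
          * (eCross A P a j ^ 2 / blockCard P j + eCross A P b j ^ 2 / blockCard P j
            + 2 * eCross A P a j * eCross A P b j / blockCard P j)
        - 4 * eCross A P a j ^ 2 / ((blockCard P a : ℝ) * blockCard P j)
        - 4 * eCross A P b j ^ 2 / ((blockCard P b : ℝ) * blockCard P j) := by
  obtain ⟨hjb, hja, -⟩ := by simpa only [mem_erase] using hj
  rw [blockPenalty_mergeBlocks_left_of_ne A P hab hja hjb, blockPenalty_of_ne A P hja.symm,
    blockPenalty_of_ne A P hjb.symm]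
  -- otherwise `ring` expands `(n_a + n_b) * n_j` under `⁻¹` and cannot match the factors
  generalize (blockCard P a : ℝ) + blockCard P b = n
  ring

end MergePenalty

theorem score_closed_form_general {V : Type*} [Fintype V] [DecidableEq V] {k : ℕ}
    (A : V → V → ℝ) (P : V → Fin k) (a b : Fin k)
    (hsym : ∀ u v, A u v = A v u)
    (h01 : ∀ u v, A u v = 0 ∨ A u v = 1)
    (hdiag : ∀ u, A u u = 0)
    (hab : a ≠ b) :
    RE A P - RE A (fun v => if P v = b then a else P v) =
      - (4 * (eIn A P a) ^ 2 / ((blockCard P a).choose 2 : ℝ))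
      - (∑ i ∈ Finset.univ.erase a,
          4 * (eCross A P a i) ^ 2 / ((blockCard P a : ℝ) * (blockCard P i : ℝ)))
      + 4 * (eCross A P a b) ^ 2 / ((blockCard P a : ℝ) * (blockCard P b : ℝ))
      - 4 * (eIn A P b) ^ 2 / ((blockCard P b).choose 2 : ℝ)
      - (∑ i ∈ Finset.univ.erase b,
          4 * (eCross A P b i) ^ 2 / ((blockCard P b : ℝ) * (blockCard P i : ℝ)))
      + 4 * (eIn A P a + eIn A P b + eCross A P a b) ^ 2
          / (((blockCard P a + blockCard P b).choose 2 : ℝ))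
      + 4 / ((blockCard P a : ℝ) + (blockCard P b : ℝ)) *
          ∑ i ∈ (Finset.univ.erase a).erase b,
            ((eCross A P a i) ^ 2 / (blockCard P i : ℝ)
              + (eCross A P b i) ^ 2 / (blockCard P i : ℝ)
              + 2 * eCross A P a i * eCross A P b i / (blockCard P i : ℝ)) := by
  change RE A P - RE A (mergeBlocks P a b) = _
  have hsplit_a := add_sum_erase (univ.erase a)
    (fun i => 4 * eCross A P a i ^ 2 / ((blockCard P a : ℝ) * blockCard P i))
    (mem_erase.mpr ⟨hab.symm, mem_univ b⟩)
  have hsplit_b := add_sum_erase (univ.erase b)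
    (fun i => 4 * eCross A P b i ^ 2 / ((blockCard P b : ℝ) * blockCard P i))
    (mem_erase.mpr ⟨hab, mem_univ a⟩)
  rw [erase_right_comm] at hsplit_b
  rw [RE_eq_sub_sum_blockPenalty A P h01 hdiag,
    RE_eq_sub_sum_blockPenalty A (mergeBlocks P a b) h01 hdiag, sub_sub_sub_cancel_left,
    sum_blockPenalty_mergeBlocks_sub A P hsym hab,
    sum_congr rfl fun j => two_mul_blockPenalty_mergeBlocks_left_sub A P hab, sum_sub_distrib,
    sum_sub_distrib, ← mul_sum, ← hsplit_a, ← hsplit_b,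
    blockPenalty_mergeBlocks_left_self A P hsym hab, blockPenalty_self, blockPenalty_self,
    blockPenalty_of_ne A P hab, eCross_comm A P hsym b a]
  ring

/-- The closed form for the score
`score(a,b) = RE(G|S) − RE(G|S^{a,b})` of merging blocks `a ≠ b`
(terms `e²/C(m,2)` with `C(m,2) = 0` are interpreted as `0`, which is Lean's convention
for division by zero). -/
theorem score_closed_form {V : Type*} [Fintype V] [DecidableEq V] {k : ℕ}
    (A : V → V → ℝ) (P : V → Fin k) (a b : Fin k)
    (hsym : ∀ u v, A u v = A v u)
    (h01 : ∀ u v, A u v = 0 ∨ A u v = 1)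
    (hdiag : ∀ u, A u u = 0)
    (hab : a ≠ b)
    (hna : 1 ≤ blockCard P a) (hnb : 1 ≤ blockCard P b)
    (hnab : 2 ≤ blockCard P a + blockCard P b)
    (hnd : ∀ i : Fin k, eIn A P i ≠ 0 → 2 ≤ blockCard P i) :
    RE A P - RE A (fun v => if P v = b then a else P v) =
      - (4 * (eIn A P a) ^ 2 / ((blockCard P a).choose 2 : ℝ))
      - (∑ i ∈ Finset.univ.erase a,
          4 * (eCross A P a i) ^ 2 / ((blockCard P a : ℝ) * (blockCard P i : ℝ)))
      + 4 * (eCross A P a b) ^ 2 / ((blockCard P a : ℝ) * (blockCard P b : ℝ))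
      - 4 * (eIn A P b) ^ 2 / ((blockCard P b).choose 2 : ℝ)
      - (∑ i ∈ Finset.univ.erase b,
          4 * (eCross A P b i) ^ 2 / ((blockCard P b : ℝ) * (blockCard P i : ℝ)))
      + 4 * (eIn A P a + eIn A P b + eCross A P a b) ^ 2
          / (((blockCard P a + blockCard P b).choose 2 : ℝ))
      + 4 / ((blockCard P a : ℝ) + (blockCard P b : ℝ)) *
          ∑ i ∈ (Finset.univ.erase a).erase b,
            ((eCross A P a i) ^ 2 / (blockCard P i : ℝ)
              + (eCross A P b i) ^ 2 / (blockCard P i : ℝ)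
              + 2 * eCross A P a i * eCross A P b i / (blockCard P i : ℝ)) :=
  score_closed_form_general A P a b hsym h01 hdiag hab
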